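/- arXiv:1609.03924 — 9 statements merged into one kernel-verified Lean document; each statement's English description precedes it below -/
import Mathlib

section
/- If D is a (δ,γ)-derivation of an algebra A and x lies in the generalized eigenspace (root space) of D for eigenvalue λ, and y lies in the generalized eigenspace for eigenvalue μ, then xy lies in the generalized eigenspace of D for eigenvalue δλ + γμ. -/
open TensorProduct

/-- products of generalized eigenvectors of a `(δ,γ)`-derivation land in the
generalized eigenspace of `δλ + γμ`. -/
theorem genEigenspace_mul {K A : Type*} [Field K] [IsAlgClosed K]
    [AddCommGroup A] [Module K A] [FiniteDimensional K A]
    (mul : A →ₗ[K] A →ₗ[K] A) (δ γ : K) (D : Module.End K A)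
    (hD : ∀ x y : A, D (mul x y) = δ • mul (D x) y + γ • mul x (D y))
    (lam mu : K) (x y : A)
    (hx : x ∈ D.maxGenEigenspace lam) (hy : y ∈ D.maxGenEigenspace mu) :
    mul x y ∈ D.maxGenEigenspace (δ * lam + γ * mu) := by
  rw [Module.End.mem_maxGenEigenspace] at hx hy ⊢
  obtain ⟨k₁, hk₁⟩ := hx
  obtain ⟨k₂, hk₂⟩ := hy
  set F : Module.End K A := D - (δ * lam + γ * mu) • 1 with hF
  set g : A ⊗[K] A →ₗ[K] A := TensorProduct.lift mul with hg
  set f₁ : Module.End K (A ⊗[K] A) := LinearMap.rTensor A (D - lam • 1) with hf₁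
  set f₂ : Module.End K (A ⊗[K] A) := LinearMap.lTensor A (D - mu • 1) with hf₂
  have h_comm_square : F ∘ₗ g = g ∘ₗ (δ • f₁ + γ • f₂) := by
    ext a b
    simp only [hF, hg, hf₁, hf₂, AlgebraTensorModule.curry_apply, TensorProduct.curry_apply,
      LinearMap.coe_restrictScalars, LinearMap.coe_comp, Function.comp_apply, lift.tmul,
      LinearMap.sub_apply, LinearMap.smul_apply, Module.End.one_apply, LinearMap.add_apply,
      LinearMap.rTensor_tmul, LinearMap.lTensor_tmul, hD a b]
    simp only [map_sub, map_smul, tmul_sub, tmul_smul, sub_tmul, smul_tmul', map_add,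
      LinearMap.sub_apply, LinearMap.smul_apply, smul_sub, add_smul, smul_smul, lift.tmul]
    module
  have key : ∀ n : ℕ, (F ^ n) (mul x y) = g (((δ • f₁ + γ • f₂) ^ n) (x ⊗ₜ y)) := by
    intro n
    have h0 : (mul x y) = g (x ⊗ₜ y) := by simp [hg]
    rw [h0, ← LinearMap.comp_apply, Module.End.commute_pow_left_of_commute h_comm_square,
      LinearMap.comp_apply]
  have hcomm : Commute (δ • f₁) (γ • f₂) := by
    apply Commute.smul_left
    apply Commute.smul_right
    ext a b
    simp only [hf₁, hf₂, Module.End.mul_apply, AlgebraTensorModule.curry_apply,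
      TensorProduct.curry_apply, LinearMap.coe_restrictScalars, LinearMap.rTensor_tmul,
      LinearMap.lTensor_tmul]
  have hf₁x : (f₁ ^ k₁) (x ⊗ₜ y) = 0 := by
    rw [hf₁, LinearMap.rTensor_pow, LinearMap.rTensor_tmul, hk₁, zero_tmul]
  have hf₂y : (f₂ ^ k₂) (x ⊗ₜ y) = 0 := by
    rw [hf₂, LinearMap.lTensor_pow, LinearMap.lTensor_tmul, hk₂, tmul_zero]
  refine ⟨k₁ + k₂, ?_⟩
  rw [key, hcomm.add_pow]
  simp only [LinearMap.coe_sum, Finset.sum_apply, map_sum]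
  apply Finset.sum_eq_zero
  intro i hi
  simp only [Finset.mem_range] at hi
  rcases le_or_gt k₁ i with h | h
  · have ha : ((δ • f₁) ^ i) ((↑(Nat.choose (k₁ + k₂) i) : Module.End K (A ⊗[K] A)) (x ⊗ₜ y)) = 0 := by
      rw [Module.End.natCast_apply, map_nsmul, smul_pow, LinearMap.smul_apply,
        Module.End.pow_map_zero_of_le h hf₁x, smul_zero, smul_zero]
    rw [(hcomm.pow_pow i (k₁ + k₂ - i)).eq, Module.End.mul_apply, Module.End.mul_apply, ha,
      map_zero, map_zero]
  · have hle : k₂ ≤ k₁ + k₂ - i := by omega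
    have hb : ((γ • f₂) ^ (k₁ + k₂ - i)) ((↑(Nat.choose (k₁ + k₂) i) : Module.End K (A ⊗[K] A)) (x ⊗ₜ y)) = 0 := by
      rw [Module.End.natCast_apply, map_nsmul, smul_pow, LinearMap.smul_apply,
        Module.End.pow_map_zero_of_le hle hf₂y, smul_zero, smul_zero]
    rw [Module.End.mul_apply, Module.End.mul_apply, hb, map_zero, map_zero]
end

section
/- On an anticommutative algebra A, if D is a (δ,γ)-derivation with δ ≠ γ, then D satisfies D(xy) = (δ+γ)·D(x)·y = (δ+γ)·x·D(y) for all x, y ∈ A. -/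
/-- on an anticommutative algebra, a `(δ,γ)`-derivation with `δ ≠ γ`
satisfies `D(xy) = (δ+γ)·D(x)y = (δ+γ)·xD(y)`. -/
theorem anticomm_delta_gamma_derivation {K A : Type*} [Field K] [AddCommGroup A] [Module K A]
    (mul : A →ₗ[K] A →ₗ[K] A) (hanti : ∀ x y : A, mul x y = - mul y x)
    (h2 : (2 : K) ≠ 0) (δ γ : K) (hδγ : δ ≠ γ) (D : A →ₗ[K] A)
    (hD : ∀ x y : A, D (mul x y) = δ • mul (D x) y + γ • mul x (D y)) :
    ∀ x y : A, D (mul x y) = (δ + γ) • mul (D x) y ∧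
      D (mul x y) = (δ + γ) • mul x (D y) := by
  intro x y
  have key : mul (D x) y = mul x (D y) := by
    have h1 : D (mul x y) = δ • mul (D x) y + γ • mul x (D y) := hD x y
    have h2' : D (mul x y) = δ • mul x (D y) + γ • mul (D x) y := by
      rw [hanti x y, map_neg, hD y x, hanti (D y) x, hanti y (D x)]
      module
    have h3 : (δ - γ) • (mul (D x) y - mul x (D y)) = 0 := by
      have := h1.symm.trans h2'
      rw [sub_smul, smul_sub, smul_sub]
      linear_combination (norm := module) this
    have hne : δ - γ ≠ 0 := sub_ne_zero_of_ne hδγ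
    have := (smul_eq_zero.mp h3).resolve_left hne
    exact sub_eq_zero.mp this
  constructor
  · rw [hD x y, key]; module
  · rw [hD x y, key]; module
end

section
/- Let A be a finite-dimensional algebra over an algebraically closed field with a (δ,γ)-derivation D, and suppose there exist eigenvalues λ, μ, η, θ, ξ of D such that 0 ≠ A_λ A_η ⊆ A_θ, A_θ A_μ ≠ 0, 0 ≠ A_η A_μ ⊆ A_ξ, A_λ A_ξ ≠ 0, and (δ² - δ)λ ≠ (γ² - γ)μ. Then the root space decomposition of A with respect to D is not a semigroup grading: the induced partial operation λ * μ' = δλ + γμ' on the set of eigenvalues cannot be extended to an associative everywhere-defined operation on any superset. -/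
section aux
variable {K A : Type*} [Field K] [AddCommGroup A] [Module K A]
variable (mul : A →ₗ[K] A →ₗ[K] A) (δ γ : K) (D : Module.End K A)

lemma step_lemma (hD : ∀ x y : A, D (mul x y) = δ • mul (D x) y + γ • mul x (D y))
    (a b : K) (x y : A) :
    (D - (δ * a + γ * b) • (1 : Module.End K A)) (mul x y)
      = δ • mul ((D - a • (1 : Module.End K A)) x) y
        + γ • mul x ((D - b • (1 : Module.End K A)) y) := by
  simp only [LinearMap.sub_apply, LinearMap.smul_apply, Module.End.one_apply, map_sub,
    map_smul, LinearMap.sub_apply, LinearMap.smul_apply, hD x y]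
  module

lemma pow_vanish (hD : ∀ x y : A, D (mul x y) = δ • mul (D x) y + γ • mul x (D y)) :
    ∀ (k : ℕ) (a b : K) (m n : ℕ) (x y : A), m + n = k →
    ((D - a • (1 : Module.End K A)) ^ m) x = 0 →
    ((D - b • (1 : Module.End K A)) ^ n) y = 0 →
    ((D - (δ * a + γ * b) • (1 : Module.End K A)) ^ k) (mul x y) = 0 := by
  intro k
  induction k with
  | zero =>
    intro a b m n x y hmn hx hy
    obtain ⟨rfl, rfl⟩ : m = 0 ∧ n = 0 := by omega
    simp only [pow_zero, Module.End.one_apply] at hx hy ⊢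
    simp [hx]
  | succ k ih =>
    intro a b m n x y hmn hx hy
    rcases Nat.eq_zero_or_pos m with rfl | hm
    · simp only [pow_zero, Module.End.one_apply] at hx
      simp [hx]
    rcases Nat.eq_zero_or_pos n with rfl | hn
    · simp only [pow_zero, Module.End.one_apply] at hy
      simp [hy]
    rw [pow_succ, Module.End.mul_apply, step_lemma mul δ γ D hD, map_add, map_smul, map_smul]
    have hx' : ((D - a • (1 : Module.End K A)) ^ (m - 1)) ((D - a • (1 : Module.End K A)) x) = 0 := by
      rw [← Module.End.mul_apply, ← pow_succ, Nat.sub_add_cancel hm]; exact hx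
    have hy' : ((D - b • (1 : Module.End K A)) ^ (n - 1)) ((D - b • (1 : Module.End K A)) y) = 0 := by
      rw [← Module.End.mul_apply, ← pow_succ, Nat.sub_add_cancel hn]; exact hy
    rw [ih a b (m - 1) n _ _ (by omega) hx' hy,
        ih a b m (n - 1) _ _ (by omega) hx hy']
    simp

lemma mul_mem_gen (hD : ∀ x y : A, D (mul x y) = δ • mul (D x) y + γ • mul x (D y))
    (a b : K) {x y : A}
    (hx : x ∈ D.maxGenEigenspace a) (hy : y ∈ D.maxGenEigenspace b) :
    mul x y ∈ D.maxGenEigenspace (δ * a + γ * b) := by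
  rw [Module.End.mem_maxGenEigenspace] at hx hy ⊢
  obtain ⟨m, hm⟩ := hx
  obtain ⟨n, hn⟩ := hy
  exact ⟨m + n, pow_vanish mul δ γ D hD (m + n) a b m n x y rfl hm hn⟩

end aux

/-- under the hypotheses of the Proposition, the root space decomposition
with respect to a `(δ,γ)`-derivation is not a semigroup grading: there is no injection of
the set of roots into a semigroup compatible with the partial operation
`λ * μ = δλ + γμ` (defined whenever `A_λ A_μ ≠ 0`). -/
theorem non_semigroup_grading {K A : Type*} [Field K] [IsAlgClosed K]
    [AddCommGroup A] [Module K A] [FiniteDimensional K A]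
    (mul : A →ₗ[K] A →ₗ[K] A) (δ γ : K) (D : Module.End K A)
    (hD : ∀ x y : A, D (mul x y) = δ • mul (D x) y + γ • mul x (D y))
    (lam mu eta theta xi : K)
    (hlam : D.maxGenEigenspace lam ≠ ⊥) (hmu : D.maxGenEigenspace mu ≠ ⊥)
    (heta : D.maxGenEigenspace eta ≠ ⊥) (htheta : D.maxGenEigenspace theta ≠ ⊥)
    (hxi : D.maxGenEigenspace xi ≠ ⊥)
    (h1 : ∃ x ∈ D.maxGenEigenspace lam, ∃ y ∈ D.maxGenEigenspace eta, mul x y ≠ 0)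
    (h1' : ∀ x ∈ D.maxGenEigenspace lam, ∀ y ∈ D.maxGenEigenspace eta,
            mul x y ∈ D.maxGenEigenspace theta)
    (h2 : ∃ x ∈ D.maxGenEigenspace theta, ∃ y ∈ D.maxGenEigenspace mu, mul x y ≠ 0)
    (h3 : ∃ x ∈ D.maxGenEigenspace eta, ∃ y ∈ D.maxGenEigenspace mu, mul x y ≠ 0)
    (h3' : ∀ x ∈ D.maxGenEigenspace eta, ∀ y ∈ D.maxGenEigenspace mu,
            mul x y ∈ D.maxGenEigenspace xi)
    (h4 : ∃ x ∈ D.maxGenEigenspace lam, ∃ y ∈ D.maxGenEigenspace xi, mul x y ≠ 0)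
    (h5 : (δ ^ 2 - δ) * lam ≠ (γ ^ 2 - γ) * mu) :
    ¬ ∃ (G : Type) (_ : Semigroup G) (ι : K → G),
        Set.InjOn ι {c : K | D.maxGenEigenspace c ≠ ⊥} ∧
        ∀ a b : K, D.maxGenEigenspace a ≠ ⊥ → D.maxGenEigenspace b ≠ ⊥ →
          (∃ x ∈ D.maxGenEigenspace a, ∃ y ∈ D.maxGenEigenspace b, mul x y ≠ 0) →
          ι (δ * a + γ * b) = ι a * ι b := by
  rintro ⟨G, _, ι, hinj, hcompat⟩
  obtain ⟨x1, hx1, y1, hy1, hne1⟩ := h1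
  obtain ⟨x3, hx3, y3, hy3, hne3⟩ := h3
  have hθ : theta = δ * lam + γ * eta := by
    by_contra hne
    exact hne1 ((Submodule.disjoint_def.mp (D.disjoint_genEigenspace hne ⊤ ⊤)) _
      (h1' x1 hx1 y1 hy1) (mul_mem_gen mul δ γ D hD _ _ hx1 hy1))
  have hξ : xi = δ * eta + γ * mu := by
    by_contra hne
    exact hne3 ((Submodule.disjoint_def.mp (D.disjoint_genEigenspace hne ⊤ ⊤)) _
      (h3' x3 hx3 y3 hy3) (mul_mem_gen mul δ γ D hD _ _ hx3 hy3))
  obtain ⟨x2, hx2, y2, hy2, hne2⟩ := h2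
  obtain ⟨x4, hx4, y4, hy4, hne4⟩ := h4
  have hθμ : D.maxGenEigenspace (δ * theta + γ * mu) ≠ ⊥ := by
    intro h
    have := mul_mem_gen mul δ γ D hD _ _ hx2 hy2
    rw [h, Submodule.mem_bot] at this
    exact hne2 this
  have hlxi : D.maxGenEigenspace (δ * lam + γ * xi) ≠ ⊥ := by
    intro h
    have := mul_mem_gen mul δ γ D hD _ _ hx4 hy4
    rw [h, Submodule.mem_bot] at this
    exact hne4 this
  have e1 := hcompat lam eta hlam heta ⟨x1, hx1, y1, hy1, hne1⟩
  have e2 := hcompat theta mu htheta hmu ⟨x2, hx2, y2, hy2, hne2⟩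
  have e3 := hcompat eta mu heta hmu ⟨x3, hx3, y3, hy3, hne3⟩
  have e4 := hcompat lam xi hlam hxi ⟨x4, hx4, y4, hy4, hne4⟩
  have key : ι (δ * theta + γ * mu) = ι (δ * lam + γ * xi) := by
    rw [e2, e4, hθ, hξ, e1, e3, mul_assoc]
  have heq := hinj hθμ hlxi key
  rw [hθ, hξ] at heq
  exact h5 (by linear_combination heq)
end

section
/- The algebra A(f_L, f_R, g_L, g_R) is associative if and only if f_L∘g_L = 0, g_L∘f_L = 0, f_R∘g_R = 0, g_R∘f_R = 0, g_R∘f_L = g_L∘f_R, and f_R∘g_L = f_L∘g_R. -/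
/-- The algebra `A(f_L, f_R, g_L, g_R)` on `Ke ⊕ Ka ⊕ V ⊕ V′`, with an element written as
`(α, β, v, w)` standing for `αe + βa + v + w′`.  The multiplication is determined by
`e² = e`, `a² = 0`, `a·v = f_L(v)′`, `v·a = f_R(v)′`, `a·v′ = g_L(v)`, `v′·a = g_R(v)`,
and all other products of the summands zero. -/
def Amul {K V : Type*} [Field K] [AddCommGroup V] [Module K V]
    (fL fR gL gR : V →ₗ[K] V) (x y : K × K × V × V) : K × K × V × V :=
  (x.1 * y.1, 0,
   x.2.1 • gL y.2.2.2 + y.2.1 • gR x.2.2.2,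
   x.2.1 • fL y.2.2.1 + y.2.1 • fR x.2.2.1)

/-- `A(f_L,f_R,g_L,g_R)` is associative iff `f_L∘g_L = g_L∘f_L = 0`,
`f_R∘g_R = g_R∘f_R = 0`, `g_R∘f_L = g_L∘f_R` and `f_R∘g_L = f_L∘g_R`. -/
theorem Amul_assoc_iff {K V : Type*} [Field K] [AddCommGroup V] [Module K V]
    (fL fR gL gR : V →ₗ[K] V) :
    (∀ x y z : K × K × V × V,
        Amul fL fR gL gR (Amul fL fR gL gR x y) z =
          Amul fL fR gL gR x (Amul fL fR gL gR y z)) ↔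
      (fL ∘ₗ gL = 0 ∧ gL ∘ₗ fL = 0 ∧ fR ∘ₗ gR = 0 ∧ gR ∘ₗ fR = 0 ∧
        gR ∘ₗ fL = gL ∘ₗ fR ∧ fR ∘ₗ gL = fL ∘ₗ gR) := by
  constructor
  · intro h
    refine ⟨?_, ?_, ?_, ?_, ?_, ?_⟩
    · ext w
      have := congrArg (fun t => t.2.2.2) (h (0,1,0,0) (0,1,0,0) (0,0,0,w))
      simp [Amul] at this ⊢
      exact this.symm
    · ext v
      have := congrArg (fun t => t.2.2.1) (h (0,1,0,0) (0,1,0,0) (0,0,v,0))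
      simp [Amul] at this ⊢
      exact this.symm
    · ext w
      have := congrArg (fun t => t.2.2.2) (h (0,0,0,w) (0,1,0,0) (0,1,0,0))
      simp [Amul] at this ⊢
      exact this
    · ext v
      have := congrArg (fun t => t.2.2.1) (h (0,0,v,0) (0,1,0,0) (0,1,0,0))
      simp [Amul] at this ⊢
      exact this
    · ext v
      have := congrArg (fun t => t.2.2.1) (h (0,1,0,0) (0,0,v,0) (0,1,0,0))
      simp [Amul] at this ⊢
      exact this
    · ext w
      have := congrArg (fun t => t.2.2.2) (h (0,1,0,0) (0,0,0,w) (0,1,0,0))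
      simp [Amul] at this ⊢
      exact this
  · rintro ⟨h1, h2, h3, h4, h5, h6⟩
    have h1' : ∀ w, fL (gL w) = 0 := fun w => by
      simpa using LinearMap.ext_iff.mp h1 w
    have h2' : ∀ v, gL (fL v) = 0 := fun v => by
      simpa using LinearMap.ext_iff.mp h2 v
    have h3' : ∀ w, fR (gR w) = 0 := fun w => by
      simpa using LinearMap.ext_iff.mp h3 w
    have h4' : ∀ v, gR (fR v) = 0 := fun v => by
      simpa using LinearMap.ext_iff.mp h4 v
    have h5' : ∀ v, gR (fL v) = gL (fR v) := fun v => by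
      simpa using LinearMap.ext_iff.mp h5 v
    have h6' : ∀ w, fR (gL w) = fL (gR w) := fun w => by
      simpa using LinearMap.ext_iff.mp h6 w
    intro x y z
    simp only [Amul, map_add, map_smul, h1', h2', h3', h4', h5', h6',
      smul_zero, smul_add, smul_smul, Prod.mk.injEq, mul_assoc]
    refine ⟨trivial, trivial, ?_, ?_⟩ <;> module
end

section
/- If f : V → V is a linear map with f∘f = 0, then the algebra A(f,f,f,f) is associative. -/
/-- if `f ∘ f = 0` then `A(f,f,f,f)` is associative. -/
theorem Amul_assoc {K V : Type*} [Field K] [AddCommGroup V] [Module K V]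
    (f : V →ₗ[K] V) (hf : f ∘ₗ f = 0) :
    ∀ x y z : K × K × V × V,
      Amul f f f f (Amul f f f f x y) z = Amul f f f f x (Amul f f f f y z) := by
  have hff : ∀ v : V, f (f v) = 0 := fun v => LinearMap.congr_fun hf v
  intro x y z
  simp [Amul, mul_assoc, hff, smul_smul]
end

section
/- Let f : V → V satisfy f∘f = 0, and define the linear map D on A(f,f,f,f) = Ke ⊕ Ka ⊕ V ⊕ V′ by D(e) = 0, D(a) = 0, D(v) = v for v ∈ V, and D(v′) = -v′ for v′ ∈ V′. Then D is a (-1)-derivation (antiderivation) of A(f,f,f,f), i.e., D(xy) = -D(x)y - xD(y) for all x, y. -/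
/-- the map `D(αe + βa + v + w′) = v - w′` (i.e. `D(e) = D(a) = 0`,
`D(v) = v`, `D(v′) = -v′`) is a `(-1)`-derivation (antiderivation) of `A(f,f,f,f)`
when `f ∘ f = 0`. -/
theorem D_is_antiderivation {K V : Type*} [Field K] [AddCommGroup V] [Module K V]
    (f : V →ₗ[K] V) (hf : f ∘ₗ f = 0)
    (D : K × K × V × V → K × K × V × V)
    (hDdef : ∀ p : K × K × V × V, D p = (0, 0, p.2.2.1, -p.2.2.2)) :
    ∀ x y : K × K × V × V,
      D (Amul f f f f x y) = -(Amul f f f f (D x) y) - Amul f f f f x (D y) := by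
  intro x y
  simp only [hDdef, Amul, Prod.mk.injEq, Prod.neg_mk, Prod.mk_sub_mk, map_add, map_smul,
    map_neg, smul_neg, smul_zero, zero_smul, mul_zero, zero_mul]
  refine ⟨by ring, by ring, by abel, by abel⟩
end

section
/- Let A = A(f,f,f,f) with f ≠ 0 and f∘f = 0, graded as A₀ = Ke ⊕ Ka, A₁ = V, A₋₁ = V′. Then A₀·A₀ ⊆ A₀ with A₀·A₀ ≠ 0, A₀·A₁ ⊆ A₋₁ with A₀·A₁ ≠ 0, A₁·A₀ ⊆ A₋₁ with A₁·A₀ ≠ 0, A₀·A₋₁ ⊆ A₁ with A₀·A₋₁ ≠ 0, and A₋₁·A₀ ⊆ A₁ with A₋₁·A₀ ≠ 0; moreover A₁·A₁ = A₁·A₋₁ = A₋₁·A₁ = A₋₁·A₋₁ = 0. -/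
/-- The component `A₀ = Ke ⊕ Ka`. -/
def Azero (K V : Type*) [Field K] [AddCommGroup V] [Module K V] :
    Submodule K (K × K × V × V) :=
  (⊤ : Submodule K K).prod ((⊤ : Submodule K K).prod
    ((⊥ : Submodule K V).prod (⊥ : Submodule K V)))

/-- The component `A₁ = V`. -/
def Aone (K V : Type*) [Field K] [AddCommGroup V] [Module K V] :
    Submodule K (K × K × V × V) :=
  (⊥ : Submodule K K).prod ((⊥ : Submodule K K).prod
    ((⊤ : Submodule K V).prod (⊥ : Submodule K V)))

/-- The component `A₋₁ = V′`. -/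
def AmOne (K V : Type*) [Field K] [AddCommGroup V] [Module K V] :
    Submodule K (K × K × V × V) :=
  (⊥ : Submodule K K).prod ((⊥ : Submodule K K).prod
    ((⊥ : Submodule K V).prod (⊤ : Submodule K V)))

/-- multiplication table of the grading
`A(f,f,f,f) = A₀ ⊕ A₁ ⊕ A₋₁` (for `f ≠ 0`, `f∘f = 0`):
`A₀A₀ ⊆ A₀`, `A₀A₁ = A₁A₀ ⊆ A₋₁`, `A₀A₋₁ = A₋₁A₀ ⊆ A₁`, all five nonzero, and all
remaining products of components vanish. -/
theorem Amul_grading_table {K V : Type*} [Field K] [AddCommGroup V] [Module K V]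
    (f : V →ₗ[K] V) (hf0 : f ≠ 0) (hf : f ∘ₗ f = 0) :
    ((∀ x ∈ Azero K V, ∀ y ∈ Azero K V, Amul f f f f x y ∈ Azero K V) ∧
      (∃ x ∈ Azero K V, ∃ y ∈ Azero K V, Amul f f f f x y ≠ 0)) ∧
    ((∀ x ∈ Azero K V, ∀ y ∈ Aone K V, Amul f f f f x y ∈ AmOne K V) ∧
      (∃ x ∈ Azero K V, ∃ y ∈ Aone K V, Amul f f f f x y ≠ 0)) ∧
    ((∀ x ∈ Aone K V, ∀ y ∈ Azero K V, Amul f f f f x y ∈ AmOne K V) ∧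
      (∃ x ∈ Aone K V, ∃ y ∈ Azero K V, Amul f f f f x y ≠ 0)) ∧
    ((∀ x ∈ Azero K V, ∀ y ∈ AmOne K V, Amul f f f f x y ∈ Aone K V) ∧
      (∃ x ∈ Azero K V, ∃ y ∈ AmOne K V, Amul f f f f x y ≠ 0)) ∧
    ((∀ x ∈ AmOne K V, ∀ y ∈ Azero K V, Amul f f f f x y ∈ Aone K V) ∧
      (∃ x ∈ AmOne K V, ∃ y ∈ Azero K V, Amul f f f f x y ≠ 0)) ∧
    (∀ x ∈ Aone K V, ∀ y ∈ Aone K V, Amul f f f f x y = 0) ∧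
    (∀ x ∈ Aone K V, ∀ y ∈ AmOne K V, Amul f f f f x y = 0) ∧
    (∀ x ∈ AmOne K V, ∀ y ∈ Aone K V, Amul f f f f x y = 0) ∧
    (∀ x ∈ AmOne K V, ∀ y ∈ AmOne K V, Amul f f f f x y = 0) := by
  obtain ⟨v, hv⟩ : ∃ v, f v ≠ 0 := by
    by_contra h
    push_neg at h
    exact hf0 (LinearMap.ext fun v => h v)
  have hff : ∀ w, f (f w) = 0 := fun w => congrFun (congrArg DFunLike.coe hf) w
  have mem0 : ∀ z : K × K × V × V, z ∈ Azero K V ↔ z.2.2.1 = 0 ∧ z.2.2.2 = 0 := by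
    intro z
    simp [Azero, Submodule.mem_prod, Prod.ext_iff]
  have mem1 : ∀ z : K × K × V × V, z ∈ Aone K V ↔ z.1 = 0 ∧ z.2.1 = 0 ∧ z.2.2.2 = 0 := by
    intro z
    simp [Aone, Submodule.mem_prod]
  have memm : ∀ z : K × K × V × V, z ∈ AmOne K V ↔ z.1 = 0 ∧ z.2.1 = 0 ∧ z.2.2.1 = 0 := by
    intro z
    simp [AmOne, Submodule.mem_prod]
  refine ⟨⟨?_, ?_⟩, ⟨?_, ?_⟩, ⟨?_, ?_⟩, ⟨?_, ?_⟩, ⟨?_, ?_⟩, ?_, ?_, ?_, ?_⟩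
  · intro x hx y hy
    rw [mem0] at hx hy ⊢
    simp [Amul, hx.1, hx.2, hy.1, hy.2]
  · exact ⟨(1,0,0,0), by simp [mem0], (1,0,0,0), by simp [mem0],
      by simp [Amul, Prod.ext_iff]⟩
  · intro x hx y hy
    rw [mem0] at hx; rw [mem1] at hy; rw [memm]
    simp [Amul, hx.1, hx.2, hy.1, hy.2.2]
  · exact ⟨(0,1,0,0), by simp [mem0], (0,0,v,0), by simp [mem1],
      by simp [Amul, Prod.ext_iff, hv]⟩
  · intro x hx y hy
    rw [mem1] at hx; rw [mem0] at hy; rw [memm]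
    simp [Amul, hx.1, hx.2.2, hy.1, hy.2]
  · exact ⟨(0,0,v,0), by simp [mem1], (0,1,0,0), by simp [mem0],
      by simp [Amul, Prod.ext_iff, hv]⟩
  · intro x hx y hy
    rw [mem0] at hx; rw [memm] at hy; rw [mem1]
    simp [Amul, hx.1, hx.2, hy.1, hy.2.2]
  · exact ⟨(0,1,0,0), by simp [mem0], (0,0,0,v), by simp [memm],
      by simp [Amul, Prod.ext_iff, hv]⟩
  · intro x hx y hy
    rw [memm] at hx; rw [mem0] at hy; rw [mem1]
    simp [Amul, hx.1, hx.2.2, hy.1, hy.2]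
  · exact ⟨(0,0,0,v), by simp [memm], (0,1,0,0), by simp [mem0],
      by simp [Amul, Prod.ext_iff, hv]⟩
  · intro x hx y hy
    rw [mem1] at hx hy
    simp [Amul, Prod.ext_iff, hx.1, hx.2.1, hx.2.2, hy.1, hy.2.1, hy.2.2]
  · intro x hx y hy
    rw [mem1] at hx; rw [memm] at hy
    simp [Amul, Prod.ext_iff, hx.1, hx.2.1, hx.2.2, hy.1, hy.2.1, hy.2.2]
  · intro x hx y hy
    rw [memm] at hx; rw [mem1] at hy
    simp [Amul, Prod.ext_iff, hx.1, hx.2.1, hx.2.2, hy.1, hy.2.1, hy.2.2]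
  · intro x hx y hy
    rw [memm] at hx hy
    simp [Amul, Prod.ext_iff, hx.1, hx.2.1, hx.2.2, hy.1, hy.2.1, hy.2.2]
end

section
/- There exists a finite-dimensional associative commutative algebra over any field K with a grading over a three-element set (Γ, *) with partial operation * such that (Γ,*) cannot be embedded into any semigroup; in particular, the 6-dimensional algebra A(f,f,f,f) with V = K² and f the nilpotent map with matrix [[0,1],[0,0]] provides such an example with grading set {0, 1, -1} and partial products 0*0=0, 0*1=1*0=-1, 0*(-1)=(-1)*0=1. -/
/-- The nilpotent map `f : K² → K²` with matrix `[[0,1],[0,0]]`. -/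
def nilf (K : Type*) [Field K] : (K × K) →ₗ[K] (K × K) :=
  LinearMap.prod (LinearMap.snd K K K) 0

open Classical in
/-- The grading components indexed by `{0, 1, -1} ⊆ K`:
`A₀ = Ke ⊕ Ka`, `A₁ = V`, `A₋₁ = V′`, and `⊥` elsewhere. -/
noncomputable def gradeE (K : Type*) [Field K] (c : K) : Submodule K (K × K × (K × K) × (K × K)) :=
  if c = 0 then
    (⊤ : Submodule K K).prod ((⊤ : Submodule K K).prod
      ((⊥ : Submodule K (K × K)).prod (⊥ : Submodule K (K × K))))
  else if c = 1 then
    (⊥ : Submodule K K).prod ((⊥ : Submodule K K).prod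
      ((⊤ : Submodule K (K × K)).prod (⊥ : Submodule K (K × K))))
  else if c = -1 then
    (⊥ : Submodule K K).prod ((⊥ : Submodule K K).prod
      ((⊥ : Submodule K (K × K)).prod (⊤ : Submodule K (K × K))))
  else ⊥

section aux
variable {K : Type*} [Field K]

lemma nilf_nilf (v : K × K) : nilf K (nilf K v) = 0 := rfl

lemma mem_grade0 (x : K × K × (K × K) × (K × K)) :
    x ∈ gradeE K 0 ↔ x.2.2.1 = 0 ∧ x.2.2.2 = 0 := by
  simp [gradeE, Submodule.mem_prod, Prod.ext_iff]

lemma mem_grade1 (x : K × K × (K × K) × (K × K)) :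
    x ∈ gradeE K 1 ↔ x.1 = 0 ∧ x.2.1 = 0 ∧ x.2.2.2 = 0 := by
  simp [gradeE, Submodule.mem_prod, one_ne_zero]

lemma mem_gradeN (h2 : (2 : K) ≠ 0) (x : K × K × (K × K) × (K × K)) :
    x ∈ gradeE K (-1) ↔ x.1 = 0 ∧ x.2.1 = 0 ∧ x.2.2.1 = 0 := by
  have hne : (-1 : K) ≠ 1 := by
    intro h; apply h2; linear_combination -h
  simp [gradeE, Submodule.mem_prod, neg_eq_zero, hne]

lemma amul_assoc (x y z : K × K × (K × K) × (K × K)) :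
    Amul (nilf K) (nilf K) (nilf K) (nilf K)
        (Amul (nilf K) (nilf K) (nilf K) (nilf K) x y) z =
      Amul (nilf K) (nilf K) (nilf K) (nilf K) x
        (Amul (nilf K) (nilf K) (nilf K) (nilf K) y z) := by
  simp [Amul, map_add, map_smul, nilf_nilf, mul_assoc]

lemma amul_comm (x y : K × K × (K × K) × (K × K)) :
    Amul (nilf K) (nilf K) (nilf K) (nilf K) x y =
      Amul (nilf K) (nilf K) (nilf K) (nilf K) y x := by
  simp [Amul, mul_comm, add_comm]

lemma gradeBot (a : K) (ha0 : a ≠ 0) (ha1 : a ≠ 1) (haN : a ≠ -1) :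
    gradeE K a = ⊥ := by
  simp [gradeE, ha0, ha1, haN]

end aux

section main
variable {K : Type*} [Field K]

lemma sup_top (h2 : (2 : K) ≠ 0) : gradeE K 0 ⊔ gradeE K 1 ⊔ gradeE K (-1) = ⊤ := by
  rw [eq_top_iff]
  intro x _
  have h1 : ((x.1, x.2.1, (0,0), (0,0)) : K × K × (K × K) × (K × K)) ∈ gradeE K 0 := by
    rw [mem_grade0]; exact ⟨rfl, rfl⟩
  have h2' : ((0, 0, x.2.2.1, (0,0)) : K × K × (K × K) × (K × K)) ∈ gradeE K 1 := by
    rw [mem_grade1]; exact ⟨rfl, rfl, rfl⟩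
  have h3 : ((0, 0, (0,0), x.2.2.2) : K × K × (K × K) × (K × K)) ∈ gradeE K (-1) := by
    rw [mem_gradeN h2]; exact ⟨rfl, rfl, rfl⟩
  have : x = ((x.1, x.2.1, (0,0), (0,0)) : K × K × (K × K) × (K × K))
      + (0, 0, x.2.2.1, (0,0)) + (0, 0, (0,0), x.2.2.2) := by
    simp [Prod.ext_iff]
  rw [this]
  refine add_mem (add_mem ?_ ?_) ?_
  · exact Submodule.mem_sup_left (Submodule.mem_sup_left h1)
  · exact Submodule.mem_sup_left (Submodule.mem_sup_right h2')
  · exact Submodule.mem_sup_right h3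

end main

open Classical in
noncomputable def stFun (K : Type*) [Field K] : K → K → K := fun a b =>
  if a = 0 then (if b = 1 then -1 else if b = -1 then 1 else 0)
  else if b = 0 then (if a = 1 then -1 else if a = -1 then 1 else 0) else 0

section main2
variable {K : Type*} [Field K]

lemma neg_one_ne_one' (h2 : (2 : K) ≠ 0) : (-1 : K) ≠ 1 := by
  intro h; apply h2; linear_combination -h

lemma st00 : stFun K 0 0 = 0 := by
  simp [stFun]
lemma st01 : stFun K 0 1 = -1 := by simp [stFun]
lemma st10 : stFun K 1 0 = -1 := by simp [stFun]
lemma st0N (h2 : (2 : K) ≠ 0) : stFun K 0 (-1) = 1 := by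
  simp [stFun, neg_one_ne_one' h2]
lemma stN0 (h2 : (2 : K) ≠ 0) : stFun K (-1) 0 = 1 := by
  simp [stFun, neg_one_ne_one' h2]

lemma amul_zero_left (y : K × K × (K × K) × (K × K)) :
    Amul (nilf K) (nilf K) (nilf K) (nilf K) 0 y = 0 := by
  simp [Amul, Prod.ext_iff]

lemma amul_zero_right (x : K × K × (K × K) × (K × K)) :
    Amul (nilf K) (nilf K) (nilf K) (nilf K) x 0 = 0 := by
  simp [Amul, Prod.ext_iff]

lemma closureG (h2 : (2 : K) ≠ 0) (a b : K) (x : K × K × (K × K) × (K × K))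
    (hx : x ∈ gradeE K a) (y : K × K × (K × K) × (K × K)) (hy : y ∈ gradeE K b) :
    Amul (nilf K) (nilf K) (nilf K) (nilf K) x y ∈ gradeE K (stFun K a b) := by
  have hN1 := neg_one_ne_one' h2
  have hcase : ∀ c : K, c = 0 ∨ c = 1 ∨ c = -1 ∨ gradeE K c = ⊥ := by
    intro c
    by_cases h0 : c = 0; · exact Or.inl h0
    by_cases h1 : c = 1; · exact Or.inr (Or.inl h1)
    by_cases hn : c = -1; · exact Or.inr (Or.inr (Or.inl hn))
    exact Or.inr (Or.inr (Or.inr (gradeBot c h0 h1 hn)))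
  rcases hcase a with ha|ha|ha|ha
  · rcases hcase b with hb|hb|hb|hb
    · subst ha hb
      rw [mem_grade0] at hx hy
      rw [st00, mem_grade0]
      simp [Amul, hx.1, hx.2, hy.1, hy.2]
    · subst ha hb
      rw [mem_grade0] at hx
      rw [mem_grade1] at hy
      rw [st01, mem_gradeN h2]
      simp [Amul, hx.1, hx.2, hy.1, hy.2.1, hy.2.2]
    · subst ha hb
      rw [mem_grade0] at hx
      rw [mem_gradeN h2] at hy
      rw [st0N h2, mem_grade1]
      simp [Amul, hx.1, hx.2, hy.1, hy.2.1, hy.2.2]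
    · rw [hb] at hy; rw [Submodule.mem_bot] at hy; subst hy
      rw [amul_zero_right]; exact zero_mem _
  · rcases hcase b with hb|hb|hb|hb
    · subst ha hb
      rw [mem_grade1] at hx
      rw [mem_grade0] at hy
      rw [st10, mem_gradeN h2]
      simp [Amul, hx.1, hx.2.1, hx.2.2, hy.1, hy.2]
    · subst ha hb
      rw [mem_grade1] at hx hy
      have : stFun K 1 1 = 0 := by simp [stFun]
      rw [this, mem_grade0]
      simp [Amul, hx.1, hx.2.1, hy.1, hy.2.1]
    · subst ha hb
      rw [mem_grade1] at hx
      rw [mem_gradeN h2] at hy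
      have : stFun K 1 (-1) = 0 := by simp [stFun, neg_ne_zero]
      rw [this, mem_grade0]
      simp [Amul, hx.1, hx.2.1, hy.1, hy.2.1]
    · rw [hb] at hy; rw [Submodule.mem_bot] at hy; subst hy
      rw [amul_zero_right]; exact zero_mem _
  · rcases hcase b with hb|hb|hb|hb
    · subst ha hb
      rw [mem_gradeN h2] at hx
      rw [mem_grade0] at hy
      rw [stN0 h2, mem_grade1]
      simp [Amul, hx.1, hx.2.1, hx.2.2, hy.1, hy.2]
    · subst ha hb
      rw [mem_gradeN h2] at hx
      rw [mem_grade1] at hy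
      have : stFun K (-1) 1 = 0 := by simp [stFun, neg_ne_zero]
      rw [this, mem_grade0]
      simp [Amul, hx.1, hx.2.1, hy.1, hy.2.1]
    · subst ha hb
      rw [mem_gradeN h2] at hx hy
      have : stFun K (-1) (-1) = 0 := by simp [stFun, neg_ne_zero]
      rw [this, mem_grade0]
      simp [Amul, hx.1, hx.2.1, hy.1, hy.2.1]
    · rw [hb] at hy; rw [Submodule.mem_bot] at hy; subst hy
      rw [amul_zero_right]; exact zero_mem _
  · rw [ha] at hx; rw [Submodule.mem_bot] at hx; subst hx
    rw [amul_zero_left]; exact zero_mem _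

end main2

/-- over any field `K` of characteristic `≠ 2`, the `6`-dimensional
associative commutative algebra `A(f,f,f,f)` (with `V = K²` and `f` the nilpotent map
with matrix `[[0,1],[0,0]]`) carries a grading over the three-element set `{0, 1, -1}`
with partial products `0*0 = 0`, `0*1 = 1*0 = -1`, `0*(-1) = (-1)*0 = 1`, which cannot
be embedded into any semigroup. -/
theorem exists_nonsemigroup_grading (K : Type*) [Field K] (h2 : (2 : K) ≠ 0) :
    ∃ st : K → K → K,
      Module.finrank K (K × K × (K × K) × (K × K)) = 6 ∧
      (∀ x y z : K × K × (K × K) × (K × K),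
        Amul (nilf K) (nilf K) (nilf K) (nilf K)
            (Amul (nilf K) (nilf K) (nilf K) (nilf K) x y) z =
          Amul (nilf K) (nilf K) (nilf K) (nilf K) x
            (Amul (nilf K) (nilf K) (nilf K) (nilf K) y z)) ∧
      (∀ x y : K × K × (K × K) × (K × K),
        Amul (nilf K) (nilf K) (nilf K) (nilf K) x y =
          Amul (nilf K) (nilf K) (nilf K) (nilf K) y x) ∧
      gradeE K 0 ⊔ gradeE K 1 ⊔ gradeE K (-1) = ⊤ ∧
      (∀ a b : K, ∀ x ∈ gradeE K a, ∀ y ∈ gradeE K b,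
        Amul (nilf K) (nilf K) (nilf K) (nilf K) x y ∈ gradeE K (st a b)) ∧
      st 0 0 = 0 ∧ st 0 1 = -1 ∧ st 1 0 = -1 ∧ st 0 (-1) = 1 ∧ st (-1) 0 = 1 ∧
      ¬ ∃ (G : Type) (_ : Semigroup G) (ι : K → G),
          Set.InjOn ι {0, 1, -1} ∧
          ∀ a b : K, a ∈ ({0, 1, -1} : Set K) → b ∈ ({0, 1, -1} : Set K) →
            (∃ x ∈ gradeE K a, ∃ y ∈ gradeE K b,
              Amul (nilf K) (nilf K) (nilf K) (nilf K) x y ≠ 0) →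
            ι (st a b) = ι a * ι b := by
  refine ⟨stFun K, by simp, fun x y z => amul_assoc x y z, fun x y => amul_comm x y,
    sup_top h2, fun a b x hx y hy => closureG h2 a b x hx y hy,
    st00, st01, st10, st0N h2, stN0 h2, ?_⟩
  rintro ⟨G, _, ι, hinj, hmul⟩
  have h0mem : (0 : K) ∈ ({0, 1, -1} : Set K) := by simp
  have h1mem : (1 : K) ∈ ({0, 1, -1} : Set K) := by simp
  have hNmem : (-1 : K) ∈ ({0, 1, -1} : Set K) := by simp
  set e : K × K × (K × K) × (K × K) := (1, 0, (0,0), (0,0)) with he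
  set aa : K × K × (K × K) × (K × K) := (0, 1, (0,0), (0,0)) with ha
  set v : K × K × (K × K) × (K × K) := (0, 0, (0,1), (0,0)) with hv
  set w : K × K × (K × K) × (K × K) := (0, 0, (0,0), (0,1)) with hw
  have heM : e ∈ gradeE K 0 := by rw [mem_grade0]; exact ⟨rfl, rfl⟩
  have haM : aa ∈ gradeE K 0 := by rw [mem_grade0]; exact ⟨rfl, rfl⟩
  have hvM : v ∈ gradeE K 1 := by rw [mem_grade1]; exact ⟨rfl, rfl, rfl⟩
  have hwM : w ∈ gradeE K (-1) := by rw [mem_gradeN h2]; exact ⟨rfl, rfl, rfl⟩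
  have h00 : ι (stFun K 0 0) = ι 0 * ι 0 := by
    refine hmul 0 0 h0mem h0mem ⟨e, heM, e, heM, ?_⟩
    simp [Amul, he, Prod.ext_iff]
  have h01 : ι (stFun K 0 1) = ι 0 * ι 1 := by
    refine hmul 0 1 h0mem h1mem ⟨aa, haM, v, hvM, ?_⟩
    simp [Amul, ha, hv, Prod.ext_iff, nilf]
  have h0N : ι (stFun K 0 (-1)) = ι 0 * ι (-1) := by
    refine hmul 0 (-1) h0mem hNmem ⟨aa, haM, w, hwM, ?_⟩
    simp [Amul, ha, hw, Prod.ext_iff, nilf]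
  rw [st00] at h00
  rw [st01] at h01
  rw [st0N h2] at h0N
  have key : ι 1 = ι (-1) := by
    calc ι 1 = ι 0 * ι (-1) := h0N
    _ = ι 0 * (ι 0 * ι 1) := by rw [h01]
    _ = (ι 0 * ι 0) * ι 1 := (mul_assoc _ _ _).symm
    _ = ι 0 * ι 1 := by rw [← h00]
    _ = ι (-1) := h01.symm
  exact neg_one_ne_one' h2 (hinj hNmem h1mem key.symm)
end

section
/- Let D be a (δ,γ)-derivation of A(f_L,f_R,g_L,g_R) where each of f_L, f_R, g_L, g_R is nonzero and (δ,γ) ≠ (0,0). If δ + γ ≠ 1 then D(e) = 0, and if δ + γ = 1 then D(e) = βe for some scalar β. -/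
/-- for a `(δ,γ)`-derivation `D` of `A(f_L,f_R,g_L,g_R)` (all four maps
nonzero, `(δ,γ) ≠ (0,0)`): if `δ + γ ≠ 1` then `D(e) = 0`, and if `δ + γ = 1` then
`D(e) = βe` for some scalar `β`. -/
theorem derivation_on_e {K V : Type*} [Field K] [AddCommGroup V] [Module K V]
    (fL fR gL gR : V →ₗ[K] V)
    (hfL : fL ≠ 0) (hfR : fR ≠ 0) (hgL : gL ≠ 0) (hgR : gR ≠ 0)
    (h1 : fL ∘ₗ gL = 0) (h2 : gL ∘ₗ fL = 0) (h3 : fR ∘ₗ gR = 0) (h4 : gR ∘ₗ fR = 0)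
    (h5 : gR ∘ₗ fL = gL ∘ₗ fR) (h6 : fR ∘ₗ gL = fL ∘ₗ gR)
    (δ γ : K) (hδγ : (δ, γ) ≠ (0, 0))
    (D : (K × K × V × V) →ₗ[K] (K × K × V × V))
    (hD : ∀ x y : K × K × V × V,
      D (Amul fL fR gL gR x y) =
        δ • Amul fL fR gL gR (D x) y + γ • Amul fL fR gL gR x (D y)) :
    (δ + γ ≠ 1 → D (1, 0, 0, 0) = 0) ∧
      (δ + γ = 1 → ∃ β : K, D (1, 0, 0, 0) = β • ((1, 0, 0, 0) : K × K × V × V)) := by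
  have h := hD (1, 0, 0, 0) (1, 0, 0, 0)
  simp only [Amul, one_mul, map_zero, smul_zero, zero_smul, add_zero, zero_add,
    Prod.smul_mk, smul_eq_mul, mul_zero, mul_one, Prod.mk_add_mk] at h
  set c := (D ((1:K), (0:K), (0:V), (0:V))).1 with hc_def
  have hc : c = (δ + γ) * c := by
    conv_lhs => rw [hc_def, h]
    ring
  constructor
  · intro hne
    have hc0 : ((1:K) - (δ + γ)) * c = 0 := by linear_combination hc
    have hz : c = 0 := by
      rcases mul_eq_zero.mp hc0 with hz | hz
      · exact absurd (sub_eq_zero.mp hz).symm hne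
      · exact hz
    rw [h, hz]
    ext <;> simp
  · intro heq
    refine ⟨c, ?_⟩
    have hcc : δ * c + γ * c = c := by linear_combination c * heq
    rw [h, hcc]
    ext <;> simp
end
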